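/- arXiv:2512.07839 — 2 statements merged into one kernel-verified Lean document; each statement's English description precedes it below -/
import Mathlib

section
/- For every positive integer m with m ≡ 3 (mod 4), there exists an odd integer N ≥ 3 and nonzero vectors e₁, …, e_N in the lattice Λ(m) = {(a, b√m) : a, b ∈ ℤ}, all of the same Euclidean norm, such that e₁ + ⋯ + e_N = 0. -/
noncomputable def Lambda (m : ℤ) : Set (EuclideanSpace ℝ (Fin 2)) :=
  {v | ∃ a b : ℤ, v 0 = (a : ℝ) ∧ v 1 = (b : ℝ) * Real.sqrt m}

noncomputable def vec2 (a b : ℝ) : EuclideanSpace ℝ (Fin 2) :=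
  (WithLp.equiv 2 (Fin 2 → ℝ)).symm ![a, b]

lemma vec2_apply0 (a b : ℝ) : vec2 a b 0 = a := rfl
lemma vec2_apply1 (a b : ℝ) : vec2 a b 1 = b := rfl

lemma vec2_norm (a b : ℝ) : ‖vec2 a b‖ = Real.sqrt (a ^ 2 + b ^ 2) := by
  rw [EuclideanSpace.norm_eq, Fin.sum_univ_two]
  simp [vec2_apply0, vec2_apply1, Real.norm_eq_abs, sq_abs]

noncomputable def evec (k : ℕ) (m : ℤ) (j : Fin (4 * k + 3)) : EuclideanSpace ℝ (Fin 2) :=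
  if j.val < 2 * k + 2 then vec2 (2 * k + 1) ((-1) ^ j.val * Real.sqrt m)
  else vec2 (-(2 * k + 2)) 0

lemma aux_sum0 (k : ℕ) :
    ∑ j ∈ Finset.range (4 * k + 3),
      (if j < 2 * k + 2 then ((2 * k + 1 : ℝ)) else -(2 * k + 2)) = 0 := by
  rw [Finset.range_eq_Ico,
    ← Finset.sum_Ico_consecutive _ (by omega : 0 ≤ 2 * k + 2) (by omega : 2 * k + 2 ≤ 4 * k + 3)]
  rw [Finset.sum_congr rfl (fun j hj => if_pos (by simp at hj; omega)),
    Finset.sum_congr rfl (g := fun _ => (-(2 * k + 2 : ℝ)))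
      (fun j hj => if_neg (by simp at hj; omega)),
    Finset.sum_const, Finset.sum_const, Nat.card_Ico, Nat.card_Ico]
  have hcard : 4 * k + 3 - (2 * k + 2) = 2 * k + 1 := by omega
  have hcard2 : 2 * k + 2 - 0 = 2 * k + 2 := by omega
  rw [hcard, hcard2]
  simp only [nsmul_eq_mul]
  push_cast
  ring

lemma aux_sum1 (k : ℕ) (s : ℝ) :
    ∑ j ∈ Finset.range (4 * k + 3),
      (if j < 2 * k + 2 then (-1 : ℝ) ^ j * s else 0) = 0 := by
  rw [Finset.range_eq_Ico,
    ← Finset.sum_Ico_consecutive _ (by omega : 0 ≤ 2 * k + 2) (by omega : 2 * k + 2 ≤ 4 * k + 3)]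
  rw [Finset.sum_congr rfl (fun j hj => if_pos (by simp at hj; omega)),
    Finset.sum_congr rfl (g := fun _ => (0 : ℝ)) (fun j hj => if_neg (by simp at hj; omega)),
    Finset.sum_const, ← Finset.range_eq_Ico, ← Finset.sum_mul, neg_one_geom_sum]
  simp [Nat.even_add]

theorem stmt_9 (m : ℤ) (hm : 0 < m) (hm4 : m % 4 = 3) :
    ∃ N : ℕ, Odd N ∧ 3 ≤ N ∧
      ∃ e : Fin N → EuclideanSpace ℝ (Fin 2),
        (∀ j, e j ∈ Lambda m) ∧ (∀ j, e j ≠ 0) ∧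
        (∃ r : ℝ, ∀ j, ‖e j‖ = r) ∧ (∑ j, e j = 0) := by
  obtain ⟨k, hk⟩ : ∃ k : ℕ, m = 4 * k + 3 := ⟨(m / 4).toNat, by omega⟩
  have hmr : (m : ℝ) = 4 * k + 3 := by exact_mod_cast congrArg (Int.cast : ℤ → ℝ) hk
  have hmnn : (0 : ℝ) ≤ m := by positivity
  have hsq : Real.sqrt m ^ 2 = m := Real.sq_sqrt hmnn
  refine ⟨4 * k + 3, ⟨2 * k + 1, by ring⟩, by omega, evec k m, ?_, ?_, ?_, ?_⟩
  · intro j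
    by_cases hj : j.val < 2 * k + 2
    · refine ⟨2 * k + 1, (-1) ^ j.val, ?_, ?_⟩ <;>
        simp [evec, hj, vec2_apply0, vec2_apply1] <;> push_cast <;> ring
    · refine ⟨-(2 * k + 2), 0, ?_, ?_⟩ <;>
        simp [evec, hj, vec2_apply0, vec2_apply1] <;> push_cast <;> ring
  · intro j h
    by_cases hj : j.val < 2 * k + 2
    · have h0 : evec k m j 0 = 2 * k + 1 := by rw [evec, if_pos hj, vec2_apply0]
      rw [h] at h0
      have : ((0 : EuclideanSpace ℝ (Fin 2)) 0 : ℝ) = 0 := rfl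
      rw [this] at h0
      have hpos : (0 : ℝ) < 2 * k + 1 := by positivity
      linarith [h0, hpos]
    · have h0 : evec k m j 0 = -(2 * k + 2) := by rw [evec, if_neg hj, vec2_apply0]
      rw [h] at h0
      have : ((0 : EuclideanSpace ℝ (Fin 2)) 0 : ℝ) = 0 := rfl
      rw [this] at h0
      have hpos : (0 : ℝ) < 2 * k + 2 := by positivity
      linarith [h0, hpos]
  · refine ⟨2 * k + 2, fun j => ?_⟩
    by_cases hj : j.val < 2 * k + 2
    · rw [evec, if_pos hj, vec2_norm, mul_pow, hsq, hmr]
      rw [show ((2 * (k:ℝ) + 1)) ^ 2 + ((-1 : ℝ) ^ j.val) ^ 2 * (4 * k + 3) = (2 * k + 2) ^ 2 by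
        rcases Nat.even_or_odd j.val with he | he
        · rw [he.neg_one_pow]; ring
        · rw [he.neg_one_pow]; ring]
      exact Real.sqrt_sq (by positivity)
    · rw [evec, if_neg hj, vec2_norm]
      rw [show (-(2 * (k:ℝ) + 2)) ^ 2 + 0 ^ 2 = (2 * k + 2) ^ 2 by ring]
      exact Real.sqrt_sq (by positivity)
  · ext i
    rw [WithLp.ofLp_sum, Finset.sum_apply]
    rcases i with ⟨iv, hiv⟩
    interval_cases iv
    · have hcomp : ∀ j : Fin (4 * k + 3),
          evec k m j ⟨0, hiv⟩ = (fun n : ℕ => if n < 2 * k + 2 then ((2 * k + 1 : ℝ)) else -(2 * k + 2)) j.val := by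
        intro j
        by_cases hj : j.val < 2 * k + 2
        · rw [evec, if_pos hj]; simp only [hj, if_pos]; rfl
        · rw [evec, if_neg hj]; simp only [hj, if_neg, not_false_iff]; rfl
      rw [Finset.sum_congr rfl (fun j _ => hcomp j),
        Fin.sum_univ_eq_sum_range (fun n : ℕ => if n < 2 * k + 2 then ((2 * k + 1 : ℝ)) else -(2 * k + 2)),
        aux_sum0 k]
      rfl
    · have hcomp : ∀ j : Fin (4 * k + 3),
          evec k m j ⟨1, hiv⟩ = (fun n : ℕ => if n < 2 * k + 2 then (-1 : ℝ) ^ n * Real.sqrt m else 0) j.val := by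
        intro j
        by_cases hj : j.val < 2 * k + 2
        · rw [evec, if_pos hj]; simp only [hj, if_pos]; rfl
        · rw [evec, if_neg hj]; simp only [hj, if_neg, not_false_iff]; rfl
      rw [Finset.sum_congr rfl (fun j _ => hcomp j),
        Fin.sum_univ_eq_sum_range (fun n : ℕ => if n < 2 * k + 2 then (-1 : ℝ) ^ n * Real.sqrt m else 0),
        aux_sum1 k]
      rfl
end

section
/- For every positive integer m with m ≡ 3 (mod 4), there exists an integer N such that for all n ≥ N there exist n nonzero vectors e₁, …, eₙ in the lattice Λ(m) = {(a, b√m) : a, b ∈ ℤ}, all of the same Euclidean norm, with e₁ + ⋯ + eₙ = 0. -/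
/-- The lattice vector `(a, b√m)`. -/
noncomputable def lvec (m a b : ℤ) : EuclideanSpace ℝ (Fin 2) :=
  (WithLp.equiv 2 (Fin 2 → ℝ)).symm ![(a : ℝ), (b : ℝ) * Real.sqrt m]

lemma lvec_apply0 (m a b : ℤ) : lvec m a b 0 = (a : ℝ) := rfl
lemma lvec_apply1 (m a b : ℤ) : lvec m a b 1 = (b : ℝ) * Real.sqrt m := rfl

lemma lvec_mem (m a b : ℤ) : lvec m a b ∈ Lambda m := ⟨a, b, rfl, rfl⟩

lemma lvec_ne_zero (m a b : ℤ) (ha : a ≠ 0) : lvec m a b ≠ 0 := by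
  intro h
  have : lvec m a b 0 = (0 : EuclideanSpace ℝ (Fin 2)) 0 := by rw [h]
  rw [lvec_apply0] at this
  simp only [PiLp.zero_apply] at this
  exact ha (by exact_mod_cast this)

lemma lvec_add (m a b c d : ℤ) : lvec m a b + lvec m c d = lvec m (a + c) (b + d) := by
  ext i
  fin_cases i <;>
    simp [PiLp.add_apply, lvec_apply0, lvec_apply1, lvec] <;> push_cast <;> ring

lemma lvec_neg (m a b : ℤ) : -lvec m a b = lvec m (-a) (-b) := by
  ext i
  fin_cases i <;>
    simp [PiLp.neg_apply, lvec_apply0, lvec_apply1, lvec] <;> push_cast <;> ring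

lemma lvec_nsmul (m a b : ℤ) (k : ℕ) : k • lvec m a b = lvec m (k * a) (k * b) := by
  rw [← Nat.cast_smul_eq_nsmul ℝ]
  ext i
  fin_cases i <;>
    simp [PiLp.smul_apply, lvec_apply0, lvec_apply1, lvec, smul_eq_mul] <;>
      push_cast <;> ring

lemma lvec_zero_zero (m : ℤ) : lvec m 0 0 = 0 := by
  ext i
  fin_cases i <;> simp [lvec]

lemma lvec_norm (m a b : ℤ) (hm : 0 ≤ m) :
    ‖lvec m a b‖ = Real.sqrt ((a : ℝ) ^ 2 + (m : ℝ) * (b : ℝ) ^ 2) := by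
  rw [EuclideanSpace.norm_eq, Fin.sum_univ_two, lvec_apply0, lvec_apply1]
  congr 1
  rw [Real.norm_eq_abs, Real.norm_eq_abs, sq_abs, sq_abs, mul_pow,
    Real.sq_sqrt (by exact_mod_cast hm : (0 : ℝ) ≤ (m : ℝ))]
  ring

lemma alt_sum {V : Type*} [AddCommGroup V] (w : V) (L : ℕ) :
    ∑ i ∈ Finset.range (2 * L), (if i % 2 = 0 then w else -w) = 0 := by
  induction L with
  | zero => simp
  | succ L ih =>
    have h : 2 * (L + 1) = (2 * L + 1) + 1 := by ring
    rw [h, Finset.sum_range_succ, Finset.sum_range_succ, ih]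
    have h1 : (2 * L) % 2 = 0 := by omega
    have h2 : (2 * L + 1) % 2 = 1 := by omega
    rw [h1, h2]
    simp

theorem stmt_11 (m : ℤ) (hm : 0 < m) (hm4 : m % 4 = 3) :
    ∃ N : ℕ, ∀ n : ℕ, N ≤ n →
      ∃ e : Fin n → EuclideanSpace ℝ (Fin 2),
        (∀ j, e j ∈ Lambda m) ∧ (∀ j, e j ≠ 0) ∧
        (∃ r : ℝ, ∀ j, ‖e j‖ = r) ∧ (∑ j, e j = 0) := by
  -- write m = 4K + 3
  obtain ⟨K, hK⟩ : ∃ K : ℕ, m = 4 * (K : ℤ) + 3 := ⟨(m / 4).toNat, by omega⟩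
  set u : EuclideanSpace ℝ (Fin 2) := lvec m (2 * K + 1) 1 with hu
  set v : EuclideanSpace ℝ (Fin 2) := lvec m (2 * K + 1) (-1) with hv
  set w : EuclideanSpace ℝ (Fin 2) := lvec m (2 * K + 2) 0 with hw
  have hm0 : (0 : ℤ) ≤ m := le_of_lt hm
  set r : ℝ := (2 * (K : ℝ) + 2) with hr
  have hr0 : (0 : ℝ) ≤ r := by positivity
  have hnu : ‖u‖ = r := by
    rw [hu, lvec_norm m _ _ hm0]
    rw [show ((2 * (K : ℤ) + 1 : ℤ) : ℝ) ^ 2 + (m : ℝ) * ((1 : ℤ) : ℝ) ^ 2 = r ^ 2 by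
      push_cast [hK]; ring]
    exact Real.sqrt_sq hr0
  have hnv : ‖v‖ = r := by
    rw [hv, lvec_norm m _ _ hm0]
    rw [show ((2 * (K : ℤ) + 1 : ℤ) : ℝ) ^ 2 + (m : ℝ) * ((-1 : ℤ) : ℝ) ^ 2 = r ^ 2 by
      push_cast [hK]; ring]
    exact Real.sqrt_sq hr0
  have hnw : ‖w‖ = r := by
    rw [hw, lvec_norm m _ _ hm0]
    rw [show ((2 * (K : ℤ) + 2 : ℤ) : ℝ) ^ 2 + (m : ℝ) * ((0 : ℤ) : ℝ) ^ 2 = r ^ 2 by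
      push_cast; ring]
    exact Real.sqrt_sq hr0
  have hzu : u ≠ 0 := lvec_ne_zero m _ _ (by omega)
  have hzv : v ≠ 0 := lvec_ne_zero m _ _ (by omega)
  have hzw : w ≠ 0 := lvec_ne_zero m _ _ (by omega)
  have hznw : -w ≠ 0 := by simpa using hzw
  have hmu : u ∈ Lambda m := lvec_mem m _ _
  have hmv : v ∈ Lambda m := lvec_mem m _ _
  have hmw : w ∈ Lambda m := lvec_mem m _ _
  have hmnw : -w ∈ Lambda m := by rw [hw, lvec_neg]; exact lvec_mem m _ _
  -- the key relation: (K+1)•u + (K+1)•v + (2K+1)•(-w) = 0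
  have key : (K + 1) • u + ((K + 1) • v + (2 * K + 1) • (-w)) = 0 := by
    rw [hu, hv, hw, lvec_neg, lvec_nsmul, lvec_nsmul, lvec_nsmul, lvec_add, lvec_add]
    rw [show ((K + 1 : ℕ) : ℤ) * (2 * (K : ℤ) + 1) + (((K + 1 : ℕ) : ℤ) * (2 * (K : ℤ) + 1)
        + ((2 * K + 1 : ℕ) : ℤ) * (-(2 * (K : ℤ) + 2))) = 0 by push_cast; ring]
    rw [show ((K + 1 : ℕ) : ℤ) * 1 + (((K + 1 : ℕ) : ℤ) * (-1)
        + ((2 * K + 1 : ℕ) : ℤ) * (-0)) = 0 by push_cast; ring]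
    exact lvec_zero_zero m
  refine ⟨4 * K + 3, fun n hn => ?_⟩
  rcases Nat.even_or_odd n with hpar | hpar
  · -- even case: alternating ±w
    obtain ⟨L, hL⟩ : ∃ L, n = 2 * L := by
      obtain ⟨t, ht⟩ := hpar; exact ⟨t, by omega⟩
    refine ⟨fun j => if (j : ℕ) % 2 = 0 then w else -w, ?_, ?_, ⟨r, ?_⟩, ?_⟩
    · intro j; dsimp only; split_ifs; exacts [hmw, hmnw]
    · intro j; dsimp only; split_ifs; exacts [hzw, hznw]
    · intro j; dsimp only; split_ifs
      exacts [hnw, by rw [norm_neg]; exact hnw]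
    · rw [Fin.sum_univ_eq_sum_range (fun i => if i % 2 = 0 then w else -w) n, hL]
      exact alt_sum w L
  · -- odd case
    obtain ⟨L, hL⟩ : ∃ L, n = 2 * L + (4 * K + 3) := by
      obtain ⟨t, ht⟩ := hpar
      exact ⟨(n - (4 * K + 3)) / 2, by omega⟩
    set Bf : ℕ → EuclideanSpace ℝ (Fin 2) := fun i =>
      if i < K + 1 then u else if i < 2 * K + 2 then v else -w with hBf
    set g : ℕ → EuclideanSpace ℝ (Fin 2) := fun i =>
      if i < 2 * L then (if i % 2 = 0 then w else -w) else Bf (i - 2 * L) with hg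
    have hcases : ∀ i, g i = u ∨ g i = v ∨ g i = w ∨ g i = -w := by
      intro i
      rw [hg, hBf]
      dsimp only
      split_ifs <;> tauto
    refine ⟨fun j => g (j : ℕ), ?_, ?_, ⟨r, ?_⟩, ?_⟩
    · intro j; show g (j : ℕ) ∈ Lambda m
      rcases hcases (j : ℕ) with h | h | h | h <;> rw [h] <;>
        first | exact hmu | exact hmv | exact hmw | exact hmnw
    · intro j; show g (j : ℕ) ≠ 0
      rcases hcases (j : ℕ) with h | h | h | h <;> rw [h] <;>
        first | exact hzu | exact hzv | exact hzw | exact hznw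
    · intro j; show ‖g (j : ℕ)‖ = r
      rcases hcases (j : ℕ) with h | h | h | h <;> rw [h] <;>
        first | exact hnu | exact hnv | exact hnw | (rw [norm_neg]; exact hnw)
    · rw [Fin.sum_univ_eq_sum_range g n, hL, Finset.sum_range_add]
      have h1 : ∑ i ∈ Finset.range (2 * L), g i = 0 := by
        rw [Finset.sum_congr rfl (fun i hi => ?_)]
        · exact alt_sum w L
        · rw [Finset.mem_range] at hi
          rw [hg]; simp only [if_pos hi]
      have h2 : ∑ i ∈ Finset.range (4 * K + 3), g (2 * L + i)
          = ∑ i ∈ Finset.range (4 * K + 3), Bf i := by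
        refine Finset.sum_congr rfl (fun i _ => ?_)
        rw [hg]
        simp only [Nat.add_sub_cancel_left, if_neg (by omega : ¬ 2 * L + i < 2 * L)]
      rw [h1, h2, zero_add]
      have hsplit : 4 * K + 3 = (K + 1) + ((K + 1) + (2 * K + 1)) := by ring
      rw [hsplit, Finset.sum_range_add Bf (K + 1) ((K + 1) + (2 * K + 1)),
        Finset.sum_range_add (fun x => Bf ((K + 1) + x)) (K + 1) (2 * K + 1)]
      have b1 : ∑ i ∈ Finset.range (K + 1), Bf i = (K + 1) • u := by
        rw [Finset.sum_congr rfl (fun i hi => ?_), Finset.sum_const, Finset.card_range]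
        rw [Finset.mem_range] at hi
        rw [hBf]; simp only [if_pos hi]
      have b2 : ∑ i ∈ Finset.range (K + 1), Bf ((K + 1) + i) = (K + 1) • v := by
        rw [Finset.sum_congr rfl (fun i hi => ?_), Finset.sum_const, Finset.card_range]
        rw [Finset.mem_range] at hi
        rw [hBf]
        simp only [if_neg (by omega : ¬ (K + 1) + i < K + 1),
          if_pos (by omega : (K + 1) + i < 2 * K + 2)]
      have b3 : ∑ i ∈ Finset.range (2 * K + 1), Bf ((K + 1) + ((K + 1) + i))
          = (2 * K + 1) • (-w) := by
        rw [Finset.sum_congr rfl (fun i hi => ?_), Finset.sum_const, Finset.card_range]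
        rw [hBf]
        simp only [if_neg (by omega : ¬ (K + 1) + ((K + 1) + i) < K + 1),
          if_neg (by omega : ¬ (K + 1) + ((K + 1) + i) < 2 * K + 2)]
      rw [b1, b2, b3]
      exact key
end
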